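/- Let n ≥ 1 and let f : ℝⁿ → ℝ (on EuclideanSpace ℝ (Fin n)) be twice continuously differentiable such that e^{-f} is a probability density (∫ e^{-f(x)} dx = 1) and the gradient ∇f is L-Lipschitz for some L > 0. Assume that x ↦ ‖∇f(x)‖² e^{-f(x)} and x ↦ Δf(x) e^{-f(x)} are Lebesgue integrable, that the vector field x ↦ e^{-f(x)} ∇f(x) is continuously differentiable with integrable divergence, and that ∫ div(e^{-f(x)} ∇f(x)) dx = 0. Then ∫ ‖∇f(x)‖² e^{-f(x)} dx ≤ n·L. -/

import Mathlib

open MeasureTheory Real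

/-- Divergence of a vector field on `EuclideanSpace ℝ (Fin n)`:
`div V x = ∑ i, ∂V_i/∂x_i (x)`. -/
noncomputable def vdiv {n : ℕ} (V : EuclideanSpace ℝ (Fin n) → EuclideanSpace ℝ (Fin n))
    (x : EuclideanSpace ℝ (Fin n)) : ℝ :=
  ∑ i, fderiv ℝ (fun y => V y i) x (EuclideanSpace.single i 1)

/-- Laplacian `Δf = ∑ i, ∂²f/∂x_i² = div (grad f)`. -/
noncomputable def lap {n : ℕ} (f : EuclideanSpace ℝ (Fin n) → ℝ)
    (x : EuclideanSpace ℝ (Fin n)) : ℝ :=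
  vdiv (fun y => gradient f y) x

theorem stmt0 {n : ℕ} (hn : 1 ≤ n) (f : EuclideanSpace ℝ (Fin n) → ℝ) (L : ℝ) (hL : 0 < L)
    (hf : ContDiff ℝ 2 f)
    (hprob : ∫ x, exp (-f x) = 1)
    (hlip : LipschitzWith L.toNNReal (fun x => gradient f x))
    (hint1 : Integrable (fun x => ‖gradient f x‖ ^ 2 * exp (-f x)))
    (hint2 : Integrable (fun x => lap f x * exp (-f x)))
    (hV : ContDiff ℝ 1 (fun x => exp (-f x) • gradient f x))
    (hdivint : Integrable (fun x => vdiv (fun y => exp (-f y) • gradient f y) x))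
    (hdiv0 : ∫ x, vdiv (fun y => exp (-f y) • gradient f y) x = 0) :
    ∫ x, ‖gradient f x‖ ^ 2 * exp (-f x) ≤ n * L := by
  classical
  have hfdiff : Differentiable ℝ f := hf.differentiable (by norm_num)
  -- key component identity
  have hgi : ∀ (y : EuclideanSpace ℝ (Fin n)) i,
      gradient f y i = fderiv ℝ f y (EuclideanSpace.single i 1) := by
    intro y i
    have h1 : (inner ℝ (gradient f y) (EuclideanSpace.single i (1:ℝ)) : ℝ)
        = fderiv ℝ f y (EuclideanSpace.single i 1) :=
      InnerProductSpace.toDual_symm_apply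
    rw [EuclideanSpace.inner_single_right] at h1
    simpa using h1
  set b : Fin n → EuclideanSpace ℝ (Fin n) → ℝ :=
    fun i y => fderiv ℝ f y (EuclideanSpace.single i 1) with hb_def
  have hbeq : ∀ i, (fun y => gradient f y i) = b i := fun i => funext fun y => hgi y i
  have hb1 : ∀ i, ContDiff ℝ 1 (b i) := by
    intro i
    have h1 : ContDiff ℝ 1 (fderiv ℝ f) := hf.fderiv_right (by norm_num)
    exact (ContinuousLinearMap.apply ℝ ℝ (EuclideanSpace.single i 1)).contDiff.comp h1
  have habs : ∀ (v : EuclideanSpace ℝ (Fin n)) i, |v i| ≤ ‖v‖ := by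
    intro v i
    have h := abs_real_inner_le_norm v (EuclideanSpace.single i (1:ℝ))
    rw [EuclideanSpace.inner_single_right] at h
    simpa using h
  -- Lipschitz bound on components
  have hlipb : ∀ i, LipschitzWith L.toNNReal (b i) := by
    intro i
    refine LipschitzWith.of_dist_le_mul fun y z => ?_
    have h1 := hlip.dist_le_mul y z
    have h2 : dist (b i y) (b i z) ≤ dist (gradient f y) (gradient f z) := by
      rw [Real.dist_eq, dist_eq_norm]
      calc |b i y - b i z| = |(gradient f y - gradient f z) i| := by
            simp [hb_def, ← hgi]
        _ ≤ ‖gradient f y - gradient f z‖ := habs _ i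
    exact h2.trans h1
  have hDb : ∀ i x, ‖fderiv ℝ (b i) x‖ ≤ L := by
    intro i x
    have := norm_fderiv_le_of_lipschitz ℝ (hlipb i) (x₀ := x)
    rwa [Real.coe_toNNReal _ hL.le] at this
  -- pointwise bound on the Laplacian
  have hlap : ∀ x, lap f x ≤ n * L := by
    intro x
    have hterm : ∀ i, fderiv ℝ (fun y => gradient f y i) x (EuclideanSpace.single i 1) ≤ L := by
      intro i
      rw [hbeq i]
      calc fderiv ℝ (b i) x (EuclideanSpace.single i 1)
          ≤ |fderiv ℝ (b i) x (EuclideanSpace.single i 1)| := le_abs_self _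
        _ ≤ ‖fderiv ℝ (b i) x‖ * ‖EuclideanSpace.single i (1:ℝ)‖ :=
            (fderiv ℝ (b i) x).le_opNorm _
        _ ≤ L * 1 := by
            have h1 : ‖EuclideanSpace.single i (1:ℝ)‖ = 1 := by simp
            rw [h1]
            exact mul_le_mul_of_nonneg_right (hDb i x) zero_le_one
        _ = L := mul_one L
    calc lap f x = ∑ i, fderiv ℝ (fun y => gradient f y i) x (EuclideanSpace.single i 1) := rfl
      _ ≤ ∑ _i : Fin n, L := Finset.sum_le_sum fun i _ => hterm i
      _ = n * L := by simp [mul_comm]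
  -- pointwise divergence identity
  have key : ∀ x, vdiv (fun y => exp (-f y) • gradient f y) x
      = lap f x * exp (-f x) - ‖gradient f x‖ ^ 2 * exp (-f x) := by
    intro x
    have ha : HasFDerivAt (fun y => exp (-f y)) (exp (-f x) • (-(fderiv ℝ f x))) x :=
      HasFDerivAt.exp ((hfdiff x).hasFDerivAt.neg)
    have hterm : ∀ i, fderiv ℝ (fun y => (exp (-f y) • gradient f y) i) x
        (EuclideanSpace.single i 1)
        = exp (-f x) * fderiv ℝ (b i) x (EuclideanSpace.single i 1)
          - exp (-f x) * (b i x)^2 := by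
      intro i
      have hfun : (fun y => (exp (-f y) • gradient f y) i) = fun y => exp (-f y) * b i y := by
        funext y
        simp [hb_def, ← hgi]
      have hbd : HasFDerivAt (b i) (fderiv ℝ (b i) x) x :=
        ((hb1 i).differentiable one_ne_zero x).hasFDerivAt
      have hmul : HasFDerivAt (fun y => exp (-f y) * b i y) _ x := ha.mul hbd
      rw [hfun, hmul.fderiv]
      have : fderiv ℝ f x (EuclideanSpace.single i 1) = b i x := rfl
      simp [this]
      ring
    have hlapx : lap f x = ∑ i, fderiv ℝ (b i) x (EuclideanSpace.single i 1) := by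
      unfold lap vdiv
      exact Finset.sum_congr rfl fun i _ => by rw [hbeq i]
    have hnorm : ‖gradient f x‖ ^ 2 = ∑ i, (b i x)^2 := by
      rw [← real_inner_self_eq_norm_sq]
      rw [PiLp.inner_apply]
      exact Finset.sum_congr rfl fun i _ => by
        simp [hb_def, ← hgi, sq, RCLike.inner_apply]
    unfold vdiv
    rw [Finset.sum_congr rfl fun i _ => hterm i, Finset.sum_sub_distrib,
      ← Finset.mul_sum, ← Finset.mul_sum, hlapx, hnorm]
    ring
  -- integral identity
  have heqfun : (fun x => vdiv (fun y => exp (-f y) • gradient f y) x)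
      = fun x => lap f x * exp (-f x) - ‖gradient f x‖ ^ 2 * exp (-f x) :=
    funext key
  have h3 : ∫ x, (lap f x * exp (-f x) - ‖gradient f x‖ ^ 2 * exp (-f x)) = 0 := by
    rw [← heqfun]; exact hdiv0
  rw [integral_sub hint2 hint1] at h3
  have h4 : ∫ x, ‖gradient f x‖ ^ 2 * exp (-f x) = ∫ x, lap f x * exp (-f x) := by linarith
  have hexp_int : Integrable (fun x => exp (-f x)) := by
    by_contra h
    rw [integral_undef h] at hprob
    norm_num at hprob
  have hmono : ∫ x, lap f x * exp (-f x) ≤ ∫ x, (n * L) * exp (-f x) := by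
    refine integral_mono hint2 (hexp_int.const_mul _) fun x => ?_
    exact mul_le_mul_of_nonneg_right (hlap x) (exp_pos _).le
  rw [integral_const_mul, hprob, mul_one] at hmono
  linarith
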